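/- arXiv:1609.07509 — 6 statements merged into one kernel-verified Lean document; each statement's English description precedes it below -/
import Mathlib

section
/- For every n ∈ ℕ and every monotone (nondecreasing) function D : ℕ → ℕ there exists M ∈ ℕ such that for every field K and every sequence Λ₁, Λ₂, Λ₃, … of sets of polynomials in K[X₁,…,Xₙ] satisfying (a) every element of Λᵢ has total degree at most D(i), and (b) the generated ideals form an ascending chain (Λ₁) ⊆ (Λ₂) ⊆ (Λ₃) ⊆ ⋯, there is some j with 1 ≤ j ≤ M and (Λ_{j+1}) ⊆ (Λ_j). -/
/-!
Suppose the chain is strict at every step `j ≤ M`. Pick `f_j ∈ Λ_{j+1}` outside `(Λ_j)` and reduce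
it modulo `(Λ_j)` for the degree-lexicographic order: the remainder `r_j` is nonzero, lies in
`(Λ_{j+1})`, its leading monomial has degree at most `D (j+1)`, and no leading monomial of a
nonzero element of `(Λ_j)` divides it. For `i < j` we have `r_i ∈ (Λ_j)`, so the leading monomials
of `r_1, …, r_M` form a bad sequence for divisibility. By Dickson's lemma and Kőnig's lemma, bad
sequences whose `j`-th term is drawn from the finite set of monomials of degree `≤ D (j+1)` have
bounded length, and that bound is `M`, independent of `K` and `Λ`.
-/

open MvPolynomial MonomialOrder

theorem WellQuasiOrderedLE.exists_bound_of_finite_levels {α : Type*} [Preorder α]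
    [WellQuasiOrderedLE α] (S : ℕ → Set α) (hS : ∀ k, (S k).Finite) :
    ∃ M, ∀ a : Fin M → α, (∀ k : Fin M, a k ∈ S k) → ∃ i j, i < j ∧ a i ≤ a j := by
  by_contra! hbad
  let Bad (N : ℕ) := {a : Fin N → α // (∀ k : Fin N, a k ∈ S k) ∧ ∀ i j, i < j → ¬ a i ≤ a j}
  have (N : ℕ) : Finite (Bad N) :=
    ((Set.Finite.pi fun k : Fin N => hS k).subset fun a ha k _ => ha.1 k).to_subtype
  have (N : ℕ) : Nonempty (Bad N) :=
    let ⟨a, ha⟩ := hbad N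
    ⟨a, ha⟩
  let restrict {i j : ℕ} (hij : i ≤ j) (a : Bad j) : Bad i :=
    ⟨fun k => a.1 (Fin.castLE hij k), fun k => a.2.1 (Fin.castLE hij k),
      fun k l hkl => a.2.2 _ _ ((Fin.castLE_lt_castLE_iff hij).mpr hkl)⟩
  obtain ⟨a, ha⟩ := exists_seq_forall_proj_of_forall_finite @restrict (fun _ _ => rfl)
    (fun _ _ _ _ _ _ => rfl) fun _ _ => Set.toFinite _
  -- The `a N` are compatible under restriction, so their last entries form an infinite bad sequence.
  obtain ⟨k, l, hkl, hle⟩ := wellQuasiOrdered_le fun k => (a (k + 1)).1 (Fin.last k)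
  have hk : (a (l + 1)).1 ⟨k, by omega⟩ = (a (k + 1)).1 (Fin.last k) :=
    congrArg (fun b : Bad (k + 1) => b.1 (Fin.last k)) (ha (show k + 1 ≤ l + 1 by omega))
  exact (a (l + 1)).2.2 ⟨k, by omega⟩ (Fin.last l) (Fin.mk_lt_mk.mpr hkl) (hk ▸ hle)

theorem MonomialOrder.exists_sub_mem_forall_not_degree_le {σ K : Type*} [Field K]
    (m : MonomialOrder σ) {I : Ideal (MvPolynomial σ K)} {f : MvPolynomial σ K} (hf : f ∉ I) :
    ∃ r, r ≠ 0 ∧ f - r ∈ I ∧ m.degree r ≼[m] m.degree f ∧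
      ∀ h ∈ I, h ≠ 0 → ¬ m.degree h ≤ m.degree r := by
  -- `r` has the least leading monomial in `f + I`; reducing it by an `h` as below would lower it.
  obtain ⟨r, hfr, hmin⟩ := (InvImage.wf (m.toSyn ∘ m.degree) wellFounded_lt).has_min
    {r | f - r ∈ I} ⟨f, by simp⟩
  have hr0 : r ≠ 0 := by
    rintro rfl
    exact hf (by simpa using hfr)
  refine ⟨r, hr0, hfr, not_lt.mp (hmin f (by simp)), fun h hI h0 hle => ?_⟩
  have hunit : IsUnit (m.leadingCoeff h) := (m.leadingCoeff_ne_zero_iff.mpr h0).isUnit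
  have hdeg : m.degree r ≠ 0 := by
    intro hr
    have hh : m.degree h = 0 := nonpos_iff_eq_zero.mp (hr ▸ hle)
    refine hf (Ideal.eq_top_of_isUnit_mem I hI ?_ ▸ Submodule.mem_top)
    rw [m.eq_C_of_degree_eq_zero hh]
    exact hunit.map C
  refine hmin (m.reduce hunit r) ?_ (m.degree_reduce_lt hunit hle hdeg)
  show f - m.reduce hunit r ∈ I
  rw [reduce, sub_sub_eq_add_sub, add_sub_right_comm]
  exact I.add_mem hfr (I.mul_mem_left _ hI)

/-- Effective Hilbert Basis Theorem: for every `n` and monotone `D : ℕ → ℕ` there is a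
uniform bound `M` such that any ascending chain of ideals `(Λ₁) ⊆ (Λ₂) ⊆ ⋯` in
`K[X₁,…,Xₙ]`, where the generators in `Λᵢ` have total degree at most `D i`, stabilizes
for one step at some `j` with `1 ≤ j ≤ M`. -/
theorem effective_hilbert_basis :
    ∀ (n : ℕ) (D : ℕ → ℕ), Monotone D → ∃ M : ℕ,
      ∀ (K : Type) [Field K] (Λ : ℕ → Set (MvPolynomial (Fin n) K)),
        (∀ i, 1 ≤ i → ∀ f ∈ Λ i, f.totalDegree ≤ D i) →
        (∀ i, 1 ≤ i → Ideal.span (Λ i) ≤ Ideal.span (Λ (i + 1))) →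
        ∃ j : ℕ, 1 ≤ j ∧ j ≤ M ∧ Ideal.span (Λ (j + 1)) ≤ Ideal.span (Λ j) := by
  intro n D _
  obtain ⟨M, hM⟩ := WellQuasiOrderedLE.exists_bound_of_finite_levels
    (fun k => {a : Fin n →₀ ℕ | a.degree ≤ D (k + 2)}) fun k => Finsupp.finite_of_degree_le _
  refine ⟨M, fun K _ Λ hdeg hchain => ?_⟩
  by_contra! hstep
  set I : ℕ → Ideal (MvPolynomial (Fin n) K) := fun k => Ideal.span (Λ (k + 1))
  have hI : Monotone I := monotone_nat_of_le_succ fun k => hchain (k + 1) (by omega)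
  have hred (k : Fin M) : ∃ r, r ≠ 0 ∧ r ∈ I (k + 1) ∧ (degLex.degree r).degree ≤ D (k + 2) ∧
      ∀ h ∈ I k, h ≠ 0 → ¬ degLex.degree h ≤ degLex.degree r := by
    obtain ⟨f, hfΛ, hfI⟩ := Set.not_subset.mp
      (mt Ideal.span_le.mpr (hstep (k + 1) (by omega) (by omega)))
    obtain ⟨r, hr0, hfr, hrf, hr⟩ := degLex.exists_sub_mem_forall_not_degree_le hfI
    refine ⟨r, hr0, ?_, ?_, hr⟩
    · rw [← sub_sub_cancel f r]
      exact Ideal.sub_mem _ (Ideal.subset_span hfΛ) (hI k.val.le_succ hfr)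
    · rw [degree_degLexDegree]
      exact (degLex_totalDegree_monotone hrf).trans (hdeg (k + 2) (by omega) f hfΛ)
  choose r hr0 hrI hrdeg hr using hred
  obtain ⟨i, j, hij, hle⟩ := hM (fun k => degLex.degree (r k)) hrdeg
  exact hr j (r i) (hI (Nat.succ_le_of_lt hij) (hrI i)) (hr0 i) hle
end

section
/- Let J be a finite type, φ : J → ℕ → Prop, and suppose for each j ∈ J we are given a functional 𝔊_j : (ℕ → ℕ) → ℕ → ℕ such that for every F : ℕ → ℕ and every d ∈ ℕ there exists k with d ≤ k ≤ 𝔊_j(F, d) such that φ_j(i) holds for all i with k ≤ i ≤ F(k). Then there exists a functional 𝔊 : (ℕ → ℕ) → ℕ → ℕ such that for every F : ℕ → ℕ and every d ∈ ℕ there exists k with d ≤ k ≤ 𝔊(F, d) such that for every j ∈ J, φ_j(i) holds for all i with k ≤ i ≤ F(k). -/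
/-!
Two predicates are knitted one at a time. Given bounds `G` for `P` and `H` for `Q`, first find a
`Q`-stable interval `[w F d', F (w F d')]` for every start `d'`, then run the `P`-bound against
the modified function `d' ↦ F (w F d')`: this yields `k₁ ≥ d` on whose interval `P` holds, and
the `Q`-interval starting at `w F k₁ ≥ k₁` lies inside it. Bounding `w F k₁` needs the maximum of
`H F` over all `d' ≤ G (F ∘ w F) d`. Induction over the finite index type finishes the proof.
-/

open Finset

def IsStabilityBound (P : ℕ → Prop) (G : (ℕ → ℕ) → ℕ → ℕ) : Prop :=
  ∀ (F : ℕ → ℕ) (d : ℕ), ∃ k, d ≤ k ∧ k ≤ G F d ∧ ∀ i, k ≤ i → i ≤ F k → P i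

theorem isStabilityBound_true : IsStabilityBound (fun _ => True) (fun _ d => d) :=
  fun _ d => ⟨d, le_rfl, le_rfl, fun _ _ _ => trivial⟩

theorem IsStabilityBound.exists_and {P Q : ℕ → Prop} {G H : (ℕ → ℕ) → ℕ → ℕ}
    (hP : IsStabilityBound P G) (hQ : IsStabilityBound Q H) :
    ∃ G', IsStabilityBound (fun i => P i ∧ Q i) G' := by
  choose w hdw hwH hwQ using hQ
  refine ⟨fun F d => (range (G (fun d' => F (w F d')) d + 1)).sup (H F), fun F d => ?_⟩
  obtain ⟨k₁, hdk₁, hk₁G, hk₁P⟩ := hP (fun d' => F (w F d')) d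
  have hk₁w : k₁ ≤ w F k₁ := hdw F k₁
  refine ⟨w F k₁, hdk₁.trans hk₁w, ?_, fun i hwi hiF => ?_⟩
  · exact (hwH F k₁).trans (le_sup (mem_range.mpr (Nat.lt_succ_of_le hk₁G)))
  · exact ⟨hk₁P i (hk₁w.trans hwi) hiF, hwQ F k₁ i hwi hiF⟩

theorem exists_isStabilityBound_forall_mem {J : Type*} (φ : J → ℕ → Prop)
    (hφ : ∀ j, ∃ G, IsStabilityBound (φ j) G) (s : Finset J) :
    ∃ G, IsStabilityBound (fun i => ∀ j ∈ s, φ j i) G := by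
  classical
  induction s using Finset.induction with
  | empty => exact ⟨_, by simpa using isStabilityBound_true⟩
  | insert j s _ ih =>
    obtain ⟨G, hG⟩ := ih
    obtain ⟨Gj, hGj⟩ := hφ j
    obtain ⟨G', hG'⟩ := hGj.exists_and hG
    exact ⟨G', by simpa only [Finset.forall_mem_insert] using hG'⟩

/-- The Knitting Lemma: if each predicate `φ j` admits, uniformly in `F` and `d`, an
interval of stability `[k, F k]` starting at some `k ≥ d` with `k ≤ 𝔊 j F d`, then
there is a single functional `𝔊` producing an interval of stability that works
simultaneously for all `j` in the finite index type `J`. -/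
theorem knitting_lemma (J : Type) [Fintype J] (φ : J → ℕ → Prop)
    (G : J → (ℕ → ℕ) → ℕ → ℕ)
    (h : ∀ (j : J) (F : ℕ → ℕ) (d : ℕ),
      ∃ k, d ≤ k ∧ k ≤ G j F d ∧ ∀ i, k ≤ i → i ≤ F k → φ j i) :
    ∃ Gall : (ℕ → ℕ) → ℕ → ℕ, ∀ (F : ℕ → ℕ) (d : ℕ),
      ∃ k, d ≤ k ∧ k ≤ Gall F d ∧ ∀ (j : J) (i : ℕ), k ≤ i → i ≤ F k → φ j i := by
  obtain ⟨Gall, hGall⟩ := exists_isStabilityBound_forall_mem φ (fun j => ⟨G j, h j⟩) univ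
  refine ⟨Gall, fun F d => ?_⟩
  obtain ⟨k, hdk, hkG, hk⟩ := hGall F d
  exact ⟨k, hdk, hkG, fun j i hki hiF => hk i hki hiF j (mem_univ j)⟩
end

section
/- For every n ∈ ℕ and every monotone (nondecreasing) function D : ℕ → ℕ there exists M ∈ ℕ such that for every sequence a₁, a₂, a₃, … of elements of ℕⁿ satisfying aᵢ(t) ≤ D(i) for every i ≥ 1 and every coordinate t, there exist indices i < j with j ≤ M such that aᵢ(t) ≤ aⱼ(t) for every coordinate t. -/
/-- Miniaturized Dickson's Lemma: for every `n` and monotone `D : ℕ → ℕ` there is an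
`M` such that every sequence `a₁, a₂, …` in `ℕⁿ` with `‖aᵢ‖∞ ≤ D i` admits indices
`1 ≤ i < j ≤ M` with `aᵢ ≼ aⱼ` coordinatewise. -/
theorem miniaturized_dickson (n : ℕ) (D : ℕ → ℕ) (hD : Monotone D) :
    ∃ M : ℕ, ∀ a : ℕ → (Fin n → ℕ),
      (∀ i, 1 ≤ i → ∀ t, a i t ≤ D i) →
      ∃ i j, 1 ≤ i ∧ i < j ∧ j ≤ M ∧ ∀ t, a i t ≤ a j t := by
  by_contra h
  push_neg at h
  -- compact product space of truncated sequences
  set X := ∀ i : ℕ, Fin n → Fin (D i + 1) with hX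
  -- sets of sequences with no good pair up to `M`
  set C : ℕ → Set X := fun M =>
    {x | ∀ i j, 1 ≤ i → i < j → j ≤ M → ∃ t, ¬ ((x i t : ℕ) ≤ (x j t : ℕ))} with hC
  have hCanti : ∀ M, C (M + 1) ⊆ C M := by
    intro M x hx i j hi hij hjM
    exact hx i j hi hij (hjM.trans (Nat.le_succ M))
  have hCne : ∀ M, (C M).Nonempty := by
    intro M
    obtain ⟨a, ha, hbad⟩ := h M
    refine ⟨fun i t => ⟨min (a i t) (D i), Nat.lt_succ_of_le (min_le_right _ _)⟩, ?_⟩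
    intro i j hi hij hjM
    obtain ⟨t, ht⟩ := hbad i j hi hij hjM
    refine ⟨t, ?_⟩
    simp only
    rw [min_eq_left (ha i hi t), min_eq_left (ha j (hi.trans hij.le) t)]
    exact not_le_of_gt ht
  have hCclosed : ∀ M, IsClosed (C M) := by
    intro M
    have hrw : C M = ⋂ (i : ℕ) (j : ℕ) (_ : 1 ≤ i) (_ : i < j) (_ : j ≤ M),
        ⋃ t, {x : X | ¬ ((x i t : ℕ) ≤ (x j t : ℕ))} := by
      ext x
      simp [hC]
    rw [hrw]
    refine isClosed_iInter fun i => isClosed_iInter fun j => isClosed_iInter fun _ =>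
      isClosed_iInter fun _ => isClosed_iInter fun _ =>
        isClosed_iUnion_of_finite fun t => ?_
    have hcont : Continuous fun x : X => (x i t, x j t) :=
      ((continuous_apply t).comp (continuous_apply i)).prodMk
        ((continuous_apply t).comp (continuous_apply j))
    have : {x : X | ¬ ((x i t : ℕ) ≤ (x j t : ℕ))} =
        (fun x : X => (x i t, x j t)) ⁻¹'
          {p : Fin (D i + 1) × Fin (D j + 1) | ¬ ((p.1 : ℕ) ≤ (p.2 : ℕ))} := rfl
    rw [this]
    exact (isClosed_discrete _).preimage hcont
  obtain ⟨x, hx⟩ := IsCompact.nonempty_iInter_of_sequence_nonempty_isCompact_isClosed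
    C hCanti hCne (hCclosed 0).isCompact hCclosed
  -- build an infinite bad sequence, contradicting Dickson's lemma
  have hx' : ∀ M, x ∈ C M := fun M => Set.mem_iInter.1 hx M
  have hpwo : Set.IsPWO (Set.univ : Set (Fin n → ℕ)) :=
    Set.isPWO_of_wellQuasiOrderedLE Set.univ
  obtain ⟨m, k, hmk, hle⟩ := Set.PartiallyWellOrderedOn.exists_lt hpwo
    (f := fun k t => ((x (k + 1) t : ℕ))) (fun _ => Set.mem_univ _)
  obtain ⟨t, ht⟩ := hx' (k + 1) (m + 1) (k + 1) (Nat.le_add_left 1 m)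
    (Nat.succ_lt_succ hmk) le_rfl
  exact ht (hle t)
end

section
/- Let α and β be ordinals below ε₀ with coordinate bound |β| < b (for a natural number b) and β < α. Then β ≤ α[b], where α[b] is the fundamental-sequence approximation of α. -/
open Ordinal

noncomputable def eps0 : Ordinal.{0} := Ordinal.nfp (fun a => Ordinal.omega0 ^ a) 0

/-- Rebuild an ordinal from a list of (exponent, coefficient) pairs. -/
noncomputable def ofCNF (L : List (Ordinal.{0} × Ordinal.{0})) : Ordinal.{0} :=
  L.foldr (fun p r => Ordinal.omega0 ^ p.1 * p.2 + r) 0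

open scoped Classical in
/-- The fundamental-sequence approximation `α[x]`. -/
noncomputable def fundSeq (x : ℕ) : Ordinal.{0} → Ordinal.{0} :=
  WellFounded.fix Ordinal.lt_wf (fun α IH =>
    if hα : α = 0 then 0
    else
      match hL : (Ordinal.CNF Ordinal.omega0 α).getLast? with
      | none => 0
      | some p =>
        if p.1 = 0 then Ordinal.pred α
        else if h : p.1 < α then
          ofCNF ((Ordinal.CNF Ordinal.omega0 α).dropLast
            ++ [(p.1, p.2 - 1), (IH p.1 h, (x : Ordinal))])
        else 0)

open scoped Classical in
/-- Transfinite iterates `g^α` of `g : ℕ → ℕ`, defined by `g^0(b) = b` and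
`g^α(b) = g^{α[b]}(g b)`. -/
noncomputable def iterOrd (g : ℕ → ℕ) : Ordinal.{0} → ℕ → ℕ :=
  WellFounded.fix Ordinal.lt_wf (fun α IH => fun b =>
    if hα : α = 0 then b
    else if h : fundSeq b α < α then IH (fundSeq b α) h (g b)
    else 0)

open scoped Classical in
/-- The coordinate bound `|α|`: the maximum of all coefficients and (hereditarily)
exponent-bounds appearing in the Cantor normal form of `α`. -/
noncomputable def coordBound : Ordinal.{0} → ℕ :=
  WellFounded.fix Ordinal.lt_wf (fun α IH =>
    ((Ordinal.CNF Ordinal.omega0 α).map (fun p =>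
      max (p.2.card.toNat) (if h : p.1 < α then IH p.1 h else 0))).foldr max 0)

/-!
Induction on `α`. Split off the last term of the Cantor normal form, `α = δ + ω ^ e`; then
`α[b] = δ` if `e = 0` and `α[b] = δ + ω ^ e[b] * b` otherwise. If `δ < β < α`, then
`β = δ + ρ` with `ρ < ω ^ e`, and as `ω ^ e` divides `δ` the Cantor normal form of `β` is that
of `δ` followed by that of `ρ`; hence `|ρ| ≤ |β| < b`. If `ω ^ e' * n` is the leading term of
`ρ`, then `n < b` and `|e'| < b`, and `e' < e`, so `e' ≤ e[b]` by induction and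
`ρ < ω ^ e' * (n + 1) ≤ ω ^ e[b] * b`.

Below `ε₀` every exponent of a Cantor normal form is smaller than the ordinal itself, so the
recursive calls in `fundSeq` and `coordBound`, which return junk `0` otherwise, do take place.
-/

open Order

lemma log_omega0_lt_self_of_lt_eps0 {γ : Ordinal.{0}} (h0 : γ ≠ 0) (hγ : γ < eps0) :
    log ω γ < γ := by
  refine (log_le_self ω γ).lt_of_ne fun h => hγ.not_ge ?_
  refine nfp_le_fp (fun _ _ hab => opow_le_opow_right omega0_pos hab) zero_le ?_
  calc ω ^ γ = ω ^ log ω γ := by rw [h]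
    _ ≤ γ := opow_log_le_self ω h0

lemma CNF_add_of_dvd {e δ ρ : Ordinal.{0}} (hδ : ω ^ e ∣ δ) (hρ : ρ < ω ^ e) :
    CNF ω (δ + ρ) = CNF ω δ ++ CNF ω ρ := by
  induction δ using CNF.rec ω with
  | H0 => simp
  | H δ hδ0 IH =>
    set l := log ω δ
    have hel : e ≤ l := (opow_le_iff_le_log one_lt_omega0 hδ0).mp (le_of_dvd hδ0 hδ)
    have hmod : ω ^ e ∣ δ % ω ^ l := by
      refine (dvd_add_iff (dvd_mul_of_dvd_left (opow_dvd_opow ω hel) (δ / ω ^ l))).mp ?_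
      rwa [div_add_mod]
    have hlt : δ % ω ^ l + ρ < ω ^ l :=
      isPrincipal_add_omega0_opow l (mod_lt δ (opow_ne_zero l omega0_ne_zero))
        (hρ.trans_le (opow_le_opow_right omega0_pos hel))
    rw [CNF.ne_zero hδ0, List.cons_append, ← IH hmod, ← CNF.opow_mul_add one_lt_omega0
      (div_opow_log_pos ω hδ0).ne' (div_opow_log_lt δ one_lt_omega0) hlt, ← add_assoc, div_add_mod]

section ofCNF

@[simp] lemma ofCNF_nil : ofCNF [] = 0 := rfl

@[simp] lemma ofCNF_cons (p : Ordinal.{0} × Ordinal.{0}) (L : List (Ordinal.{0} × Ordinal.{0})) :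
    ofCNF (p :: L) = ω ^ p.1 * p.2 + ofCNF L := rfl

lemma ofCNF_append (L M : List (Ordinal.{0} × Ordinal.{0})) :
    ofCNF (L ++ M) = ofCNF L + ofCNF M := by
  induction L with
  | nil => simp
  | cons p L ih => rw [List.cons_append, ofCNF_cons, ofCNF_cons, ih, add_assoc]

lemma ofCNF_CNF (α : Ordinal.{0}) : ofCNF (CNF ω α) = α :=
  CNF.foldr ω α

lemma omega0_opow_dvd_ofCNF {e : Ordinal.{0}} {L : List (Ordinal.{0} × Ordinal.{0})}
    (h : ∀ p ∈ L, e ≤ p.1) : ω ^ e ∣ ofCNF L := by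
  induction L with
  | nil => exact dvd_zero _
  | cons p L ih =>
    refine dvd_add (dvd_mul_of_dvd_left (opow_dvd_opow ω (h p List.mem_cons_self)) _) ?_
    exact ih fun q hq => h q (List.mem_cons_of_mem _ hq)

end ofCNF

open scoped Classical in
lemma fundSeq_eq (x : ℕ) (α : Ordinal.{0}) : fundSeq x α =
    if _hα : α = 0 then 0
    else
      match _hL : (CNF ω α).getLast? with
      | none => 0
      | some p =>
        if p.1 = 0 then pred α
        else if _h : p.1 < α then
          ofCNF ((CNF ω α).dropLast ++ [(p.1, p.2 - 1), (fundSeq x p.1, (x : Ordinal))])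
        else 0 := by
  rw [fundSeq, WellFounded.fix_eq]

section lastTerm

variable {α e c : Ordinal.{0}} {L : List (Ordinal.{0} × Ordinal.{0})}

lemma exists_CNF_eq_append_singleton (hα : α ≠ 0) :
    ∃ L e c, CNF ω α = L ++ [(e, c)] := by
  obtain ⟨L, ⟨e, c⟩, h⟩ := (List.eq_nil_or_concat (CNF ω α)).resolve_left
    (by rw [CNF.ne_zero hα]; exact List.cons_ne_nil _ _)
  exact ⟨L, e, c, by simpa using h⟩

lemma eq_add_omega0_opow_of_CNF_eq_append (h : CNF ω α = L ++ [(e, c)]) :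
    α = ofCNF L + ω ^ e * (c - 1) + ω ^ e := by
  have hmem : (e, c) ∈ CNF ω α := by simp [h]
  obtain ⟨n, rfl⟩ := lt_omega0.mp (CNF.snd_lt one_lt_omega0 hmem)
  have hn : 0 < n := by simpa using CNF.snd_pos hmem
  conv_lhs => rw [← ofCNF_CNF α, h, ofCNF_append]
  rw [add_assoc, ← mul_add_one, ← Nat.cast_one, ← natCast_sub, ← Nat.cast_add,
    Nat.sub_add_cancel hn]
  simp

lemma omega0_opow_dvd_of_CNF_eq_append (h : CNF ω α = L ++ [(e, c)]) :
    ω ^ e ∣ ofCNF L + ω ^ e * (c - 1) := by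
  refine dvd_add (omega0_opow_dvd_ofCNF fun p hp => ?_) (dvd_mul_right _ _)
  have hsorted := (CNF.sortedGT ω α).pairwise
  rw [h, List.map_append, List.pairwise_append] at hsorted
  exact (hsorted.2.2 p.1 (List.mem_map_of_mem hp) e (by simp)).le

lemma fundSeq_of_CNF_eq_append (x : ℕ) (h : CNF ω α = L ++ [(e, c)]) :
    fundSeq x α = if e = 0 then pred α
      else if e < α then ofCNF L + ω ^ e * (c - 1) + ω ^ fundSeq x e * x else 0 := by
  have hα : α ≠ 0 := by rintro rfl; simp at h
  rw [fundSeq_eq, dif_neg hα]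
  split
  next hL => simp [h] at hL
  next p hL =>
    rw [h, List.getLast?_concat, Option.some_inj] at hL
    subst hL
    simp only [h, List.dropLast_concat, ofCNF_append, ofCNF_cons, ofCNF_nil, add_zero, add_assoc,
      dite_eq_ite]

end lastTerm

section coordBound

open scoped Classical in
lemma coordBound_eq (γ : Ordinal.{0}) : coordBound γ =
    ((CNF ω γ).map fun p =>
      max p.2.card.toNat (if _h : p.1 < γ then coordBound p.1 else 0)).foldr max 0 := by
  rw [coordBound, WellFounded.fix_eq]

variable {γ γ' : Ordinal.{0}} {p : Ordinal.{0} × Ordinal.{0}}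

lemma card_toNat_le_coordBound (hp : p ∈ CNF ω γ) : p.2.card.toNat ≤ coordBound γ := by
  rw [coordBound_eq]
  exact List.le_max_of_le (List.mem_map_of_mem hp) (le_max_left _ _)

lemma coordBound_fst_le (hp : p ∈ CNF ω γ) (h : p.1 < γ) : coordBound p.1 ≤ coordBound γ := by
  rw [coordBound_eq γ]
  refine List.le_max_of_le (List.mem_map_of_mem hp) ?_
  rw [dif_pos h]
  exact le_max_right _ _

lemma coordBound_mono_of_subset (hle : γ ≤ γ') (hsub : CNF ω γ ⊆ CNF ω γ') :
    coordBound γ ≤ coordBound γ' := by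
  rw [coordBound_eq γ]
  refine List.max_le_of_forall_le _ _ fun n hn => ?_
  obtain ⟨p, hp, rfl⟩ := List.mem_map.mp hn
  refine max_le (card_toNat_le_coordBound (hsub hp)) ?_
  split_ifs with h
  · exact coordBound_fst_le (hsub hp) (h.trans_le hle)
  · exact Nat.zero_le _

lemma coordBound_le_add_of_dvd {e δ ρ : Ordinal.{0}} (hδ : ω ^ e ∣ δ) (hρ : ρ < ω ^ e) :
    coordBound ρ ≤ coordBound (δ + ρ) :=
  coordBound_mono_of_subset le_add_self <| by
    rw [CNF_add_of_dvd hδ hρ]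
    exact List.subset_append_right _ _

lemma lt_omega0_opow_log_mul_coordBound_add_one (ρ : Ordinal.{0}) :
    ρ < ω ^ log ω ρ * (coordBound ρ + 1 : ℕ) := by
  rcases eq_or_ne ρ 0 with rfl | hρ
  · simp
  have hmem : (log ω ρ, ρ / ω ^ log ω ρ) ∈ CNF ω ρ := by
    rw [CNF.ne_zero hρ]
    exact List.mem_cons_self
  obtain ⟨n, hn⟩ := lt_omega0.mp (div_opow_log_lt ρ one_lt_omega0)
  have hn_le : n ≤ coordBound ρ := by simpa [hn] using card_toNat_le_coordBound hmem
  calc ρ < ω ^ log ω ρ * succ (ρ / ω ^ log ω ρ) :=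
        lt_mul_succ_div ρ (opow_ne_zero _ omega0_ne_zero)
    _ ≤ ω ^ log ω ρ * (coordBound ρ + 1 : ℕ) := by
      rw [hn, succ_eq_add_one]
      gcongr
      exact_mod_cast Nat.succ_le_succ hn_le

lemma coordBound_log_le (hγ : γ < eps0) : coordBound (log ω γ) ≤ coordBound γ := by
  rcases eq_or_ne γ 0 with rfl | hγ0
  · simp
  refine coordBound_fst_le (p := (log ω γ, γ / ω ^ log ω γ)) ?_
    (log_omega0_lt_self_of_lt_eps0 hγ0 hγ)
  rw [CNF.ne_zero hγ0]
  exact List.mem_cons_self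

end coordBound

theorem le_fundSeq_of_lt_general (α β : Ordinal.{0}) (hα : α < eps0)
    (b : ℕ) (hcoord : coordBound β < b) (hlt : β < α) :
    β ≤ fundSeq b α := by
  induction α using WellFoundedLT.induction generalizing β with
  | _ α IH =>
  have hα0 : α ≠ 0 := hlt.ne_bot
  obtain ⟨L, e, c, hCNF⟩ := exists_CNF_eq_append_singleton hα0
  set δ := ofCNF L + ω ^ e * (c - 1)
  have hαδ : α = δ + ω ^ e := eq_add_omega0_opow_of_CNF_eq_append hCNF
  rw [fundSeq_of_CNF_eq_append b hCNF]
  rcases eq_or_ne e 0 with rfl | he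
  · rw [hαδ, opow_zero] at hlt
    rw [if_pos rfl, hαδ, opow_zero, pred_add_one]
    exact lt_add_one_iff.mp hlt
  have he_lt : e < α := (CNF.fst_le_log (x := (e, c)) (by simp [hCNF])).trans_lt
    (log_omega0_lt_self_of_lt_eps0 hα0 hα)
  rw [if_neg he, if_pos he_lt]
  obtain hβδ | ⟨ρ, rfl⟩ := (lt_or_ge β δ).imp_right exists_add_of_le
  · exact hβδ.le.trans le_self_add
  have hρ : ρ < ω ^ e := by rwa [hαδ, add_lt_add_iff_left] at hlt
  have hρb : coordBound ρ < b :=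
    (coordBound_le_add_of_dvd (omega0_opow_dvd_of_CNF_eq_append hCNF) hρ).trans_lt hcoord
  have hρε : ρ < eps0 := le_add_self.trans_lt (hlt.trans hα)
  have hlog : log ω ρ ≤ fundSeq b e :=
    IH e he_lt _ (he_lt.trans hα) ((coordBound_log_le hρε).trans_lt hρb)
      ((lt_opow_iff_log_lt' one_lt_omega0 he).mp hρ)
  gcongr
  calc ρ ≤ ω ^ log ω ρ * (coordBound ρ + 1 : ℕ) :=
        (lt_omega0_opow_log_mul_coordBound_add_one ρ).le
    _ ≤ ω ^ fundSeq b e * b :=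
      mul_le_mul' (opow_le_opow_right omega0_pos hlog) (Nat.cast_le.mpr hρb)

/-- If `|β| < b` and `β < α` (for ordinals below `ε₀`), then `β ≤ α[b]`. -/
theorem le_fundSeq_of_lt (α β : Ordinal.{0}) (hα : α < eps0) (hβ : β < eps0)
    (b : ℕ) (hcoord : coordBound β < b) (hlt : β < α) :
    β ≤ fundSeq b α :=
  le_fundSeq_of_lt_general α β hα b hcoord hlt
end

section
/- Let g : ℕ → ℕ be monotone (nondecreasing) with g(b) ≥ b+1 for all b, and let α, β be ordinals below ε₀ such that every exponent appearing in the Cantor normal form of β is less than or equal to every exponent appearing in the Cantor normal form of α (this holds vacuously if α = 0 or β = 0). Then for every b ∈ ℕ, g^{α+β}(b) = g^α(g^β(b)). -/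
open Ordinal

private lemma fundSeq_getLast_zero {x : ℕ} {α : Ordinal} {p : Ordinal × Ordinal}
    (h0 : α ≠ 0) (hp : (CNF omega0 α).getLast? = some p) (hp0 : p.1 = 0) :
    fundSeq x α = Ordinal.pred α := by
  unfold fundSeq
  rw [WellFounded.fix_eq]
  beta_reduce
  rw [dif_neg h0]
  split
  · rename_i hq; rw [hq] at hp; exact absurd hp (by simp)
  · rename_i q hq
    rw [hq] at hp
    obtain rfl : q = p := Option.some.inj hp
    rw [if_pos hp0]

private lemma fundSeq_getLast_ne_zero {x : ℕ} {α : Ordinal} {p : Ordinal × Ordinal}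
    (h0 : α ≠ 0) (hp : (CNF omega0 α).getLast? = some p) (hp0 : p.1 ≠ 0) (hpα : p.1 < α) :
    fundSeq x α = ofCNF ((CNF omega0 α).dropLast
      ++ [(p.1, p.2 - 1), (fundSeq x p.1, (x : Ordinal))]) := by
  unfold fundSeq
  rw [WellFounded.fix_eq]
  beta_reduce
  rw [dif_neg h0]
  split
  · rename_i hq; rw [hq] at hp; exact absurd hp (by simp)
  · rename_i q hq
    rw [hq] at hp
    obtain rfl : q = p := Option.some.inj hp
    rw [if_neg hp0, dif_pos hpα]

open scoped Classical in
private lemma iterOrd_eq (g : ℕ → ℕ) (α : Ordinal.{0}) (b : ℕ) :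
    iterOrd g α b =
      if _hα : α = 0 then b
      else if h : fundSeq b α < α then iterOrd g (fundSeq b α) (g b)
      else 0 :=
  congrFun (WellFounded.fix_eq (C := fun _ => ℕ → ℕ) _ _ _) b

private lemma iterOrd_zero (g : ℕ → ℕ) (b : ℕ) : iterOrd g 0 b = b := by
  rw [iterOrd_eq]; simp

private lemma iterOrd_pos (g : ℕ → ℕ) {α : Ordinal.{0}} {b : ℕ} (h0 : α ≠ 0)
    (h : fundSeq b α < α) : iterOrd g α b = iterOrd g (fundSeq b α) (g b) := by
  rw [iterOrd_eq, dif_neg h0, dif_pos h]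


private lemma omega0_opow_eps0 : omega0 ^ eps0 = eps0 :=
  nfp_fp (isNormal_opow one_lt_omega0) 0

private lemma add_lt_eps0 {a b : Ordinal} (ha : a < eps0) (hb : b < eps0) : a + b < eps0 := by
  have h : a + b < omega0 ^ eps0 :=
    principal_add_omega0_opow eps0 (ha.trans_le omega0_opow_eps0.ge) (hb.trans_le omega0_opow_eps0.ge)
  rwa [omega0_opow_eps0] at h

private lemma log_lt_self_of_lt_eps0 {a : Ordinal} (h0 : a ≠ 0) (ha : a < eps0) :
    log omega0 a < a := by
  rcases (log_le_self omega0 a).lt_or_eq with h | h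
  · exact h
  · exfalso
    have h1 : omega0 ^ a ≤ a := by
      conv_lhs => rw [← h]
      exact opow_log_le_self _ h0
    have h3 : eps0 ≤ a :=
      nfp_le_fp (isNormal_opow one_lt_omega0).strictMono.monotone (zero_le (a := a)) h1
    exact (ha.trans_le h3).false

private lemma log_opow_mul_add_eq {e c s : Ordinal} (hc : c ≠ 0) (hcw : c < omega0)
    (hs : s < omega0 ^ e) : log omega0 (omega0 ^ e * c + s) = e := by
  rw [log_opow_mul_add one_lt_omega0 hc hs, log_eq_zero hcw, add_zero]

private lemma div_opow_eq {e : Ordinal} (c : Ordinal) {s : Ordinal} (hs : s < omega0 ^ e) :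
    (omega0 ^ e * c + s) / omega0 ^ e = c := by
  rw [mul_add_div _ (opow_ne_zero e omega0_ne_zero), div_eq_zero_of_lt hs, add_zero]

private lemma mod_opow_eq {e : Ordinal} (c : Ordinal) {s : Ordinal} (hs : s < omega0 ^ e) :
    (omega0 ^ e * c + s) % omega0 ^ e = s := by
  rw [mul_add_mod_self, mod_eq_of_lt hs]

private lemma nat_sub_one_add_one {c : Ordinal} (hc0 : c ≠ 0) (hc : c < omega0) :
    c - 1 + 1 = c := by
  obtain ⟨n, rfl⟩ := lt_omega0.1 hc
  have hn : n ≠ 0 := by simpa using hc0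
  rw [← Nat.cast_one, ← Ordinal.natCast_sub, ← Nat.cast_add]
  congr 1
  omega

private lemma natCast_add_sub_one {c d : Ordinal} (hc : c < omega0) (hd : d < omega0)
    (hd0 : d ≠ 0) : c + d - 1 = c + (d - 1) := by
  obtain ⟨n, rfl⟩ := lt_omega0.1 hc
  obtain ⟨m, rfl⟩ := lt_omega0.1 hd
  have hm : m ≠ 0 := by simpa using hd0
  rw [← Nat.cast_one, ← Nat.cast_add, ← Ordinal.natCast_sub, ← Ordinal.natCast_sub,
    ← Nat.cast_add]
  congr 1
  omega

private lemma add_lt_omega0' {c d : Ordinal} (hc : c < omega0) (hd : d < omega0) :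
    c + d < omega0 := by
  obtain ⟨n, rfl⟩ := lt_omega0.1 hc
  obtain ⟨m, rfl⟩ := lt_omega0.1 hd
  rw [← Nat.cast_add]
  exact nat_lt_omega0 _
private lemma exists_succ_of_getLast_zero :
    ∀ α : Ordinal.{0}, α ≠ 0 → ∀ p : Ordinal × Ordinal,
      (CNF omega0 α).getLast? = some p → p.1 = 0 → ∃ u, α = u + 1 := by
  intro α
  induction α using Ordinal.induction with
  | h α IH =>
    intro h0 p hp hp0
    have hCNFα : CNF omega0 α
        = (log omega0 α, α / omega0 ^ log omega0 α) :: CNF omega0 (α % omega0 ^ log omega0 α) :=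
      CNF.ne_zero h0
    by_cases hr : α % omega0 ^ log omega0 α = 0
    · have hsingle : CNF omega0 α = [(log omega0 α, α / omega0 ^ log omega0 α)] := by
        rw [hCNFα, hr, CNF.zero_right]
      rw [hsingle] at hp
      simp only [List.getLast?_singleton, Option.some.injEq] at hp
      obtain rfl := hp.symm
      have he0 : log omega0 α = 0 := hp0
      have hαω : α < omega0 := by
        have h := lt_opow_succ_log_self one_lt_omega0 α
        rwa [he0, succ_zero, opow_one] at h
      obtain ⟨n, rfl⟩ := lt_omega0.1 hαω
      cases n with
      | zero => exact absurd (by simp) h0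
      | succ m => exact ⟨(m : Ordinal), by rw [Nat.cast_succ]⟩
    · have hCNFr : CNF omega0 (α % omega0 ^ log omega0 α) ≠ [] := by
        rw [CNF.ne_zero hr]; exact List.cons_ne_nil _ _
      have hpr : (CNF omega0 (α % omega0 ^ log omega0 α)).getLast? = some p := by
        rw [hCNFα] at hp
        cases hL : CNF omega0 (α % omega0 ^ log omega0 α) with
        | nil => exact absurd hL hCNFr
        | cons q t => rw [hL, List.getLast?_cons_cons] at hp; exact hp
      have hrα : α % omega0 ^ log omega0 α < α :=
        (mod_lt α (opow_ne_zero _ omega0_ne_zero)).trans_le (opow_log_le_self _ h0)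
      obtain ⟨u, hu⟩ := IH _ hrα hr p hpr hp0
      refine ⟨omega0 ^ log omega0 α * (α / omega0 ^ log omega0 α) + u, ?_⟩
      conv_lhs => rw [← div_add_mod α (omega0 ^ log omega0 α)]
      rw [hu, add_assoc]

private lemma fundSeq_of_log_zero {x : ℕ} {α : Ordinal} (h0 : α ≠ 0)
    (he : log omega0 α = 0) : fundSeq x α = Ordinal.pred α := by
  have hCNF : CNF omega0 α = [(0, α)] := by
    rw [CNF.ne_zero h0, he]
    simp [mod_one, CNF.zero_right, div_one]
  exact fundSeq_getLast_zero (p := ((0 : Ordinal), α)) h0 (by rw [hCNF]; simp) rfl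

private lemma fundSeq_of_mod_zero {x : ℕ} {α : Ordinal} (h0 : α ≠ 0) (heps : α < eps0)
    (he : log omega0 α ≠ 0) (hr : α % omega0 ^ log omega0 α = 0) :
    fundSeq x α = omega0 ^ log omega0 α * (α / omega0 ^ log omega0 α - 1)
      + omega0 ^ (fundSeq x (log omega0 α)) * x := by
  have hCNF : CNF omega0 α = [(log omega0 α, α / omega0 ^ log omega0 α)] := by
    rw [CNF.ne_zero h0, hr, CNF.zero_right]
  have hlt : log omega0 α < α := log_lt_self_of_lt_eps0 h0 heps
  rw [fundSeq_getLast_ne_zero (p := (log omega0 α, α / omega0 ^ log omega0 α)) h0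
      (by rw [hCNF]; simp) he hlt, hCNF]
  simp [ofCNF]

private lemma fundSeq_of_mod_ne_zero {x : ℕ} {α : Ordinal} (h0 : α ≠ 0) (heps : α < eps0)
    (hr : α % omega0 ^ log omega0 α ≠ 0) :
    fundSeq x α = omega0 ^ log omega0 α * (α / omega0 ^ log omega0 α)
      + fundSeq x (α % omega0 ^ log omega0 α) := by
  set e := log omega0 α with hedef
  set c := α / omega0 ^ e with hcdef
  set r := α % omega0 ^ e with hrdef
  have hrα : r < α := (mod_lt α (opow_ne_zero _ omega0_ne_zero)).trans_le (opow_log_le_self _ h0)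
  have hreps : r < eps0 := hrα.trans heps
  have hCNFr : CNF omega0 r ≠ [] := by rw [CNF.ne_zero hr]; exact List.cons_ne_nil _ _
  set p := (CNF omega0 r).getLast hCNFr with hpdef
  have hpr : (CNF omega0 r).getLast? = some p := List.getLast?_eq_getLast _
  have hCNFα : CNF omega0 α = (e, c) :: CNF omega0 r := CNF.ne_zero h0
  have hpα : (CNF omega0 α).getLast? = some p := by
    rw [hCNFα]
    cases hL : CNF omega0 r with
    | nil => exact absurd hL hCNFr
    | cons q t => rw [hL] at hpr; rw [List.getLast?_cons_cons]; exact hpr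
  have hpmem : p ∈ CNF omega0 r := List.getLast_mem _
  have hple : p.1 ≤ log omega0 r := CNF.fst_le_log hpmem
  have hplt_r : p.1 < r := hple.trans_lt (log_lt_self_of_lt_eps0 hr hreps)
  have hplt_α : p.1 < α := hplt_r.trans hrα
  have hdrop : (CNF omega0 α).dropLast = (e, c) :: (CNF omega0 r).dropLast := by
    rw [hCNFα]
    cases hL : CNF omega0 r with
    | nil => exact absurd hL hCNFr
    | cons q t => rfl
  by_cases hp0 : p.1 = 0
  · rw [fundSeq_getLast_zero h0 hpα hp0, fundSeq_getLast_zero hr hpr hp0]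
    obtain ⟨u, hu⟩ := exists_succ_of_getLast_zero r hr p hpr hp0
    conv_lhs => rw [← div_add_mod α (omega0 ^ e), ← hcdef, ← hrdef, hu]
    rw [hu, ← add_assoc, add_one_eq_succ, add_one_eq_succ, pred_succ, pred_succ]
  · rw [fundSeq_getLast_ne_zero h0 hpα hp0 hplt_α,
      fundSeq_getLast_ne_zero hr hpr hp0 hplt_r, hdrop, List.cons_append]
    rfl
private lemma fundSeq_lt {x : ℕ} : ∀ {α : Ordinal.{0}}, α ≠ 0 → α < eps0 → fundSeq x α < α := by
  intro α
  induction α using Ordinal.induction with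
  | h α IH =>
    intro h0 heps
    by_cases he : log omega0 α = 0
    · rw [fundSeq_of_log_zero h0 he]
      have hαω : α < omega0 := by
        have h := lt_opow_succ_log_self one_lt_omega0 α
        rwa [he, succ_zero, opow_one] at h
      obtain ⟨n, rfl⟩ := lt_omega0.1 hαω
      cases n with
      | zero => exact absurd (by simp) h0
      | succ m =>
        rw [Nat.cast_succ, add_one_eq_succ, pred_succ]
        exact Order.lt_succ _
    · have hloglt : log omega0 α < α := log_lt_self_of_lt_eps0 h0 heps
      have hc0 : α / omega0 ^ log omega0 α ≠ 0 := (div_opow_log_pos omega0 h0).ne'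
      have hcω : α / omega0 ^ log omega0 α < omega0 := div_opow_log_lt α one_lt_omega0
      by_cases hr : α % omega0 ^ log omega0 α = 0
      · rw [fundSeq_of_mod_zero h0 heps he hr]
        have hfe : fundSeq x (log omega0 α) < log omega0 α := IH _ hloglt he (hloglt.trans heps)
        have h1 : omega0 ^ (fundSeq x (log omega0 α)) * (x : Ordinal) < omega0 ^ log omega0 α := by
          have h2 : omega0 ^ (fundSeq x (log omega0 α)) * (x : Ordinal)
              < omega0 ^ (fundSeq x (log omega0 α)) * omega0 :=
            (mul_lt_mul_iff_right₀ (opow_pos _ omega0_pos)).2 (nat_lt_omega0 x)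
          apply h2.trans_le
          rw [← opow_succ]
          exact opow_le_opow_right omega0_pos (Order.succ_le_of_lt hfe)
        calc omega0 ^ log omega0 α * (α / omega0 ^ log omega0 α - 1)
              + omega0 ^ (fundSeq x (log omega0 α)) * (x : Ordinal)
            < omega0 ^ log omega0 α * (α / omega0 ^ log omega0 α - 1)
              + omega0 ^ log omega0 α := add_lt_add_right h1 _
          _ = omega0 ^ log omega0 α * (α / omega0 ^ log omega0 α - 1 + 1) := by
              rw [mul_add, mul_one]
          _ = omega0 ^ log omega0 α * (α / omega0 ^ log omega0 α) := by
              rw [nat_sub_one_add_one hc0 hcω]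
          _ ≤ α := by
              conv_rhs => rw [← div_add_mod α (omega0 ^ log omega0 α)]
              exact le_add_right le_rfl
      · rw [fundSeq_of_mod_ne_zero h0 heps hr]
        have hrα : α % omega0 ^ log omega0 α < α :=
          (mod_lt α (opow_ne_zero _ omega0_ne_zero)).trans_le (opow_log_le_self _ h0)
        have h1 := IH _ hrα hr (hrα.trans heps)
        calc omega0 ^ log omega0 α * (α / omega0 ^ log omega0 α)
              + fundSeq x (α % omega0 ^ log omega0 α)
            < omega0 ^ log omega0 α * (α / omega0 ^ log omega0 α)
              + α % omega0 ^ log omega0 α := add_lt_add_right h1 _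
          _ = α := div_add_mod α _
private lemma fundSeq_add (x : ℕ) {β : Ordinal.{0}} (hβ0 : β ≠ 0) (hβe : β < eps0) :
    ∀ α : Ordinal.{0}, α < eps0 → (∀ p ∈ CNF omega0 α, log omega0 β ≤ p.1) →
      fundSeq x (α + β) = α + fundSeq x β := by
  intro α
  induction α using Ordinal.induction with
  | h α IH =>
    intro heps hA
    by_cases h0 : α = 0
    · rw [h0, zero_add, zero_add]
    set f := log omega0 β with hfdef
    set e := log omega0 α with hedef
    set c := α / omega0 ^ e with hcdef
    set r := α % omega0 ^ e with hrdef
    have hαeq : omega0 ^ e * c + r = α := div_add_mod α _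
    have hCNFα : CNF omega0 α = (e, c) :: CNF omega0 r := CNF.ne_zero h0
    have hfe : f ≤ e := hA (e, c) (by rw [hCNFα]; exact List.mem_cons_self)
    have hc0 : c ≠ 0 := (div_opow_log_pos omega0 h0).ne'
    have hcω : c < omega0 := div_opow_log_lt α one_lt_omega0
    have hrlt : r < omega0 ^ e := mod_lt α (opow_ne_zero _ omega0_ne_zero)
    have hrα : r < α := hrlt.trans_le (opow_log_le_self _ h0)
    have hβω : β < omega0 ^ (Order.succ f) := lt_opow_succ_log_self one_lt_omega0 β
    have hαβ0 : α + β ≠ 0 := fun h =>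
      hβ0 (le_antisymm (le_trans (le_add_left le_rfl) h.le) (zero_le (a := β)))
    have hαβe : α + β < eps0 := add_lt_eps0 heps hβe
    rcases lt_or_eq_of_le hfe with hlt | heq
    · -- f < e
      have hβe' : β < omega0 ^ e :=
        hβω.trans_le (opow_le_opow_right omega0_pos (Order.succ_le_of_lt hlt))
      have hrβ : r + β < omega0 ^ e := principal_add_omega0_opow e hrlt hβe'
      have hrβ0 : r + β ≠ 0 := fun h =>
        hβ0 (le_antisymm (le_trans (le_add_left le_rfl) h.le) (zero_le (a := β)))
      have hsum : α + β = omega0 ^ e * c + (r + β) := by rw [← hαeq, add_assoc]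
      have hlog : log omega0 (α + β) = e := by rw [hsum]; exact log_opow_mul_add_eq hc0 hcω hrβ
      have hdiv : (α + β) / omega0 ^ e = c := by rw [hsum]; exact div_opow_eq c hrβ
      have hmod : (α + β) % omega0 ^ e = r + β := by rw [hsum]; exact mod_opow_eq c hrβ
      rw [fundSeq_of_mod_ne_zero hαβ0 hαβe (by rw [hlog, hmod]; exact hrβ0), hlog, hdiv, hmod]
      by_cases hr0 : r = 0
      · rw [hr0, zero_add]
        conv_rhs => rw [← hαeq, hr0, add_zero]
      · rw [IH r hrα (hrα.trans heps)
          (fun p hp => hA p (by rw [hCNFα]; exact List.mem_cons_of_mem _ hp))]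
        rw [← hαeq, add_assoc]
    · -- f = e, so r = 0 and α = ω^e * c
      have hr0 : r = 0 := by
        by_contra hr0
        have hmem : (log omega0 r, r / omega0 ^ log omega0 r) ∈ CNF omega0 α := by
          rw [hCNFα, CNF.ne_zero hr0]
          exact List.mem_cons_of_mem _ (List.mem_cons_self)
        have h1 : f ≤ log omega0 r := hA _ hmem
        have h2 : log omega0 r < e := (lt_opow_iff_log_lt one_lt_omega0 hr0).1 hrlt
        exact absurd (h1.trans_lt h2) (heq ▸ lt_irrefl e)
      have hαeq' : α = omega0 ^ e * c := by rw [← hαeq, hr0, add_zero]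
      set d := β / omega0 ^ f with hddef
      set s := β % omega0 ^ f with hsdef
      have hβeq : omega0 ^ f * d + s = β := div_add_mod β _
      have hd0 : d ≠ 0 := (div_opow_log_pos omega0 hβ0).ne'
      have hdω : d < omega0 := div_opow_log_lt β one_lt_omega0
      have hslt : s < omega0 ^ f := mod_lt β (opow_ne_zero _ omega0_ne_zero)
      rw [heq] at hβeq hslt
      have hcd0 : c + d ≠ 0 := fun h => hc0 (le_antisymm (le_trans (le_add_right le_rfl) h.le)
        (zero_le (a := c)))
      have hcdω : c + d < omega0 := add_lt_omega0' hcω hdω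
      have hsum : α + β = omega0 ^ e * (c + d) + s := by
        rw [hαeq', ← hβeq, mul_add, add_assoc]
      have hlog : log omega0 (α + β) = e := by
        rw [hsum]; exact log_opow_mul_add_eq hcd0 hcdω hslt
      have hdiv : (α + β) / omega0 ^ e = c + d := by rw [hsum]; exact div_opow_eq _ hslt
      have hmod : (α + β) % omega0 ^ e = s := by rw [hsum]; exact mod_opow_eq _ hslt
      by_cases hs0 : s = 0
      · by_cases he0 : e = 0
        · -- both α and β finite
          rw [fundSeq_of_log_zero hαβ0 (by rw [hlog, he0]),
            fundSeq_of_log_zero hβ0 (by rw [← hfdef, heq, he0])]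
          have hβd : β = d := by rw [← hβeq, hs0, add_zero, he0, opow_zero, one_mul]
          have hβω' : β < omega0 := hβd ▸ hdω
          obtain ⟨n, hn⟩ := lt_omega0.1 hβω'
          cases n with
          | zero => exact absurd (by rw [hn]; simp) hβ0
          | succ m =>
            rw [hn, Nat.cast_succ, ← add_assoc, add_one_eq_succ, add_one_eq_succ,
              pred_succ, pred_succ]
        · -- R1 on both sides
          rw [fundSeq_of_mod_zero hαβ0 hαβe (by rw [hlog]; exact he0)
              (by rw [hlog, hmod]; exact hs0),
            fundSeq_of_mod_zero hβ0 hβe (by rw [← hfdef, heq]; exact he0)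
              (by rw [← hfdef, ← hsdef]; exact hs0)]
          rw [hlog, hdiv, ← hfdef, ← hddef, heq]
          rw [natCast_add_sub_one hcω hdω hd0, mul_add, hαeq', add_assoc]
      · -- R2 on both sides
        rw [fundSeq_of_mod_ne_zero hαβ0 hαβe (by rw [hlog, hmod]; exact hs0),
          fundSeq_of_mod_ne_zero hβ0 hβe (by rw [← hfdef, ← hsdef]; exact hs0)]
        rw [hlog, hdiv, hmod, ← hfdef, ← hddef, ← hsdef, heq]
        rw [mul_add, hαeq', add_assoc]
private lemma iterOrd_add_aux (g : ℕ → ℕ) (α : Ordinal.{0}) (hα : α < eps0) :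
    ∀ β : Ordinal.{0}, β < eps0 → (∀ p ∈ CNF omega0 α, log omega0 β ≤ p.1) →
      ∀ b : ℕ, iterOrd g (α + β) b = iterOrd g α (iterOrd g β b) := by
  intro β
  induction β using Ordinal.induction with
  | h β IH =>
    intro hβ hA b
    by_cases hβ0 : β = 0
    · rw [hβ0, add_zero, iterOrd_zero]
    · have hlt : fundSeq b β < β := fundSeq_lt hβ0 hβ
      have hadd : fundSeq b (α + β) = α + fundSeq b β := fundSeq_add b hβ0 hβ α hα hA
      have hαβ0 : α + β ≠ 0 := fun h =>
        hβ0 (le_antisymm (le_trans (le_add_left le_rfl) h.le) (zero_le (a := β)))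
      rw [iterOrd_pos g hαβ0 (by rw [hadd]; exact add_lt_add_right hlt α), hadd,
        IH (fundSeq b β) hlt (hlt.trans hβ)
          (fun p hp => (log_mono_right _ hlt.le).trans (hA p hp)) (g b),
        ← iterOrd_pos g hβ0 hlt]


/-- If every exponent in the Cantor normal form of `β` is at most every exponent in
the Cantor normal form of `α` (for ordinals below `ε₀`), then
`g^{α+β}(b) = g^α(g^β(b))` for all `b`. -/
theorem iterOrd_add (g : ℕ → ℕ) (hg : Monotone g) (hg1 : ∀ x, x + 1 ≤ g x)
    (α β : Ordinal.{0}) (hα : α < eps0) (hβ : β < eps0)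
    (hexp : ∀ p ∈ Ordinal.CNF Ordinal.omega0 α, ∀ q ∈ Ordinal.CNF Ordinal.omega0 β,
      q.1 ≤ p.1) :
    ∀ b : ℕ, iterOrd g (α + β) b = iterOrd g α (iterOrd g β b) := by
  apply iterOrd_add_aux g α hα β hβ
  intro p hp
  by_cases hβ0 : β = 0
  · rw [hβ0, log_zero_right]
    exact zero_le
  · exact hexp p hp _ (by rw [CNF.ne_zero hβ0]; exact List.mem_cons_self)
end

section
/- For every n ≥ 1 and every d ≥ n, 𝔭ₙ(d) ≤ 𝒢^{ω²·8n}(d), where 𝒢(b) = b+1 and 𝒢^{ω²·8n} is the transfinite iterate of 𝒢 of ordinal length ω²·8n. -/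
open Ordinal

/-- `𝔡ₘ(b) = (2b)^(2^m)` -/
def dfrak (m b : ℕ) : ℕ := (2 * b) ^ (2 ^ m)

/-- `𝔢(n,b) = 2^((b+𝔡_{n−1}(b))^(n−1)+1)·b + b + 𝔡_{n−1}(b)` -/
def efrak (n b : ℕ) : ℕ :=
  2 ^ ((b + dfrak (n - 1) b) ^ (n - 1) + 1) * b + b + dfrak (n - 1) b

/-- `ζ₀(n,d) = C(n+𝔡ₙ(d), n)` -/
def zeta0 (n d : ℕ) : ℕ := Nat.choose (n + dfrak n d) n

/-- `ζ₁(n,d,b) = (C(b+n,n)+2)·ζ₀(n,d)` -/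
def zeta1 (n d b : ℕ) : ℕ := (Nat.choose (b + n) n + 2) * zeta0 n d

/-- `ζ₂(n,d,b) = (ζ₁(n,d,b)+1)^(2^(ζ₁(n,d,b))−1)` -/
def zeta2 (n d b : ℕ) : ℕ := (zeta1 n d b + 1) ^ (2 ^ zeta1 n d b - 1)

/-- `𝔭ₙ(d)`: the primality bound, defined by `𝔭₁(d) = d` and
`𝔭ₙ(d) = max{2·C(υ(n,d)+n,n)·υ(n,d), 𝔢(n−1,d)}` where
`υ(n,d) = ζ₁(n−1,𝔭_{n−1}(d),d)·ζ₂(n−1,𝔭_{n−1}(d),d)`. -/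
def pfrak : ℕ → ℕ → ℕ
  | 0, d => d
  | 1, d => d
  | (n + 2), d =>
    let u := zeta1 (n + 1) (pfrak (n + 1) d) d * zeta2 (n + 1) (pfrak (n + 1) d) d
    max (2 * Nat.choose (u + (n + 2)) (n + 2) * u) (efrak (n + 1) d)

section FS
open scoped Classical

lemma fundSeq_def (x : ℕ) (α : Ordinal.{0}) :
    fundSeq x α =
    (if _hα : α = 0 then 0
    else
      match _hL : (Ordinal.CNF Ordinal.omega0 α).getLast? with
      | none => 0
      | some p =>
        if p.1 = 0 then Ordinal.pred α
        else if h : p.1 < α then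
          ofCNF ((Ordinal.CNF Ordinal.omega0 α).dropLast
            ++ [(p.1, p.2 - 1), (fundSeq x p.1, (x : Ordinal))])
        else 0) := by
  rw [fundSeq, WellFounded.fix_eq]

lemma iterOrd_def (g : ℕ → ℕ) (α : Ordinal.{0}) (b : ℕ) :
    iterOrd g α b =
    (if α = 0 then b
    else if fundSeq b α < α then iterOrd g (fundSeq b α) (g b)
    else 0) := by
  rw [iterOrd, WellFounded.fix_eq]
  split <;> simp_all

lemma fundSeq_of_CNF_last_zero (x : ℕ) {α : Ordinal.{0}} (hα : α ≠ 0)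
    {L : List (Ordinal.{0} × Ordinal.{0})} {v : Ordinal.{0}}
    (hCNF : Ordinal.CNF Ordinal.omega0 α = L ++ [(0, v)]) :
    fundSeq x α = Ordinal.pred α := by
  rw [fundSeq_def, dif_neg hα]
  split
  · next hL =>
    rw [hCNF] at hL
    simp [List.getLast?_append] at hL
  · next p hL =>
    rw [hCNF] at hL
    simp [List.getLast?_append] at hL
    rw [if_pos (by rw [← hL])]

lemma fundSeq_of_CNF_last_pos (x : ℕ) {α β v : Ordinal.{0}} (hα : α ≠ 0)
    {L : List (Ordinal.{0} × Ordinal.{0})}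
    (hCNF : Ordinal.CNF Ordinal.omega0 α = L ++ [(β, v)]) (hβ : β ≠ 0) (hβα : β < α) :
    fundSeq x α = ofCNF (L ++ [(β, v - 1), (fundSeq x β, (x : Ordinal))]) := by
  rw [fundSeq_def, dif_neg hα]
  split
  · next hL =>
    rw [hCNF] at hL
    simp [List.getLast?_append] at hL
  · next p hL =>
    rw [hCNF] at hL
    simp [List.getLast?_append] at hL
    subst hL
    rw [if_neg hβ, dif_pos hβα, hCNF]
    simp

end FS

lemma CNF_omega_cons (u v w : Ordinal.{0}) (hv : v ≠ 0) (hw : w < omega0 ^ u) (hvw : v < omega0) :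
    Ordinal.CNF omega0 (omega0 ^ u * v + w) = (u, v) :: Ordinal.CNF omega0 w := by
  have hne : omega0 ^ u * v + w ≠ 0 := by
    intro h
    have := left_eq_zero_of_add_eq_zero h
    exact hv (by
      rcases mul_eq_zero.1 this with h' | h'
      · exact absurd h' (opow_ne_zero u omega0_ne_zero)
      · exact h')
  have hlog : log omega0 (omega0 ^ u * v + w) = u := by
    rw [log_opow_mul_add one_lt_omega0 hv hw, log_eq_zero hvw, add_zero]
  rw [Ordinal.CNF.ne_zero hne, hlog]
  have hdiv : (omega0 ^ u * v + w) / omega0 ^ u = v := by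
    rw [Ordinal.mul_add_div _ (opow_ne_zero u omega0_ne_zero),
      Ordinal.div_eq_zero_of_lt hw, add_zero]
  have hmod : (omega0 ^ u * v + w) % omega0 ^ u = w := by
    rw [Ordinal.mul_add_mod_self, Ordinal.mod_eq_of_lt hw]
  rw [hdiv, hmod]

/-- `O a b c = ω²·a + ω·b + c`. -/
noncomputable def OO (a b c : ℕ) : Ordinal.{0} :=
  omega0 ^ (2 : Ordinal) * a + omega0 * b + c

lemma lt_omega_sq (b c : ℕ) : omega0 * (b : Ordinal) + c < omega0 ^ (2 : Ordinal) := by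
  have h1 : omega0 * (b : Ordinal) + c < omega0 * (b : Ordinal) + omega0 :=
    add_lt_add_right (nat_lt_omega0 c) _
  have h2 : omega0 * (b : Ordinal) + omega0 = omega0 * ((b : Ordinal) + 1) := by
    rw [mul_add, mul_one]
  have h3 : omega0 * ((b : Ordinal) + 1) ≤ omega0 * omega0 := by
    apply mul_le_mul_right
    have : ((b : Ordinal) + 1) = ((b + 1 : ℕ) : Ordinal) := by push_cast; ring
    rw [this]
    exact (nat_lt_omega0 (b+1)).le
  have h4 : omega0 ^ (2 : Ordinal) = omega0 * omega0 := by
    rw [show (2 : Ordinal) = 1 + 1 by norm_num, opow_add, opow_one]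
  calc omega0 * (b : Ordinal) + c < omega0 * ((b:Ordinal)+1) := h2 ▸ h1
    _ ≤ omega0 * omega0 := h3
    _ = omega0 ^ (2 : Ordinal) := h4.symm

lemma OO_zero : OO 0 0 0 = 0 := by simp [OO]

lemma CNF_OO (a b c : ℕ) :
    Ordinal.CNF omega0 (OO a b c) =
      (if a = 0 then [] else [((2:Ordinal), (a:Ordinal))]) ++
      (if b = 0 then [] else [((1:Ordinal), (b:Ordinal))]) ++
      (if c = 0 then [] else [((0:Ordinal), (c:Ordinal))]) := by
  have hc : ∀ c : ℕ, Ordinal.CNF omega0 (c : Ordinal) =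
      (if c = 0 then [] else [((0:Ordinal), (c:Ordinal))]) := by
    intro c
    rcases Nat.eq_zero_or_pos c with rfl | hc
    · simp
    · rw [if_neg hc.ne',
        Ordinal.CNF.of_lt (by exact_mod_cast hc.ne') (nat_lt_omega0 c)]
  have hb : ∀ b c : ℕ, Ordinal.CNF omega0 (omega0 * b + c) =
      (if b = 0 then [] else [((1:Ordinal), (b:Ordinal))]) ++
      (if c = 0 then [] else [((0:Ordinal), (c:Ordinal))]) := by
    intro b c
    rcases Nat.eq_zero_or_pos b with rfl | hbpos
    · simpa using hc c
    · rw [if_neg hbpos.ne', List.singleton_append]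
      have h1 : omega0 * (b:Ordinal) + c = omega0 ^ (1:Ordinal) * b + c := by
        rw [opow_one]
      rw [h1, CNF_omega_cons _ _ _ (by exact_mod_cast hbpos.ne')
        (by rw [opow_one]; exact nat_lt_omega0 c) (nat_lt_omega0 b)]
      rw [hc c]
  rcases Nat.eq_zero_or_pos a with rfl | hapos
  · rw [if_pos rfl, List.nil_append]
    have : OO 0 b c = omega0 * b + c := by simp [OO]
    rw [this, hb]
  · rw [if_neg hapos.ne']
    rw [show OO a b c = omega0 ^ (2:Ordinal) * a + (omega0 * b + c) by
      rw [OO, add_assoc]]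
    rw [CNF_omega_cons _ _ _ (by exact_mod_cast hapos.ne') (lt_omega_sq b c)
      (nat_lt_omega0 a), hb, List.singleton_append, List.cons_append]

lemma fundSeq_nat (x c : ℕ) : fundSeq x ((c:Ordinal) + 1) = c := by
  have hne : ((c:Ordinal) + 1) ≠ 0 :=
    (lt_of_lt_of_le zero_lt_one le_add_self).ne' 
  have hcast : ((c:Ordinal) + 1) = ((c+1 : ℕ) : Ordinal) := by push_cast; ring
  have hCNF : Ordinal.CNF omega0 ((c:Ordinal)+1) = [] ++ [((0:Ordinal), ((c+1:ℕ):Ordinal))] := by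
    rw [hcast, Ordinal.CNF.of_lt (by rw [← hcast]; exact hne) (nat_lt_omega0 (c+1))]
    simp
  rw [fundSeq_of_CNF_last_zero x hne hCNF]
  rw [show (c:Ordinal) + 1 = Order.succ (c:Ordinal) by rw [add_one_eq_succ]]
  exact Ordinal.pred_succ _

lemma fundSeq_one (x : ℕ) : fundSeq x 1 = 0 := by
  simpa using fundSeq_nat x 0

lemma fundSeq_two (x : ℕ) : fundSeq x 2 = 1 := by
  simpa [one_add_one_eq_two] using fundSeq_nat x 1

lemma OO_ne_zero_c (a b c : ℕ) : OO a b (c+1) ≠ 0 := by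
  rw [OO, Ne, Ordinal.add_eq_zero_iff]
  rintro ⟨-, h⟩
  exact absurd h (by exact_mod_cast Nat.succ_ne_zero c)

/-- `fundSeq` on `OO a b (c+1)`. -/
lemma fundSeq_OO_c (x a b c : ℕ) : fundSeq x (OO a b (c+1)) = OO a b c := by
  have hCNF := CNF_OO a b (c+1)
  rw [if_neg (Nat.succ_ne_zero c)] at hCNF
  rw [fundSeq_of_CNF_last_zero x (OO_ne_zero_c a b c) hCNF]
  have : OO a b (c+1) = Order.succ (OO a b c) := by
    rw [OO, OO, ← add_one_eq_succ]
    push_cast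
    simp [add_assoc]
  rw [this, Ordinal.pred_succ]

lemma omega_le_OO_b (a b : ℕ) (c : ℕ) : omega0 ≤ OO a (b+1) c := by
  rw [OO]
  calc omega0 = omega0 * 1 := (mul_one _).symm
    _ ≤ omega0 * ((b+1 : ℕ) : Ordinal) := by
        apply mul_le_mul_right
        exact_mod_cast Nat.one_le_iff_ne_zero.2 (Nat.succ_ne_zero b)
    _ ≤ omega0 ^ (2:Ordinal) * a + omega0 * ((b+1:ℕ):Ordinal) := le_add_self
    _ ≤ _ := le_self_add

lemma omega_sq_le_OO_a (a b c : ℕ) : omega0 ^ (2:Ordinal) ≤ OO (a+1) b c := by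
  rw [OO]
  calc omega0 ^ (2:Ordinal) = omega0 ^ (2:Ordinal) * 1 := (mul_one _).symm
    _ ≤ omega0 ^ (2:Ordinal) * ((a+1 : ℕ) : Ordinal) := by
        apply mul_le_mul_right
        exact_mod_cast Nat.one_le_iff_ne_zero.2 (Nat.succ_ne_zero a)
    _ ≤ _ := le_self_add |>.trans le_self_add

lemma fundSeq_OO_b (x a b : ℕ) : fundSeq x (OO a (b+1) 0) = OO a b x := by
  have hne : OO a (b+1) 0 ≠ 0 :=
    fun h => absurd (h ▸ omega_le_OO_b a b 0) (by simp [omega0_ne_zero, Ordinal.omega0_pos.not_ge])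
  have hCNF := CNF_OO a (b+1) 0
  rw [if_pos rfl, if_neg (Nat.succ_ne_zero b), List.append_nil] at hCNF
  rw [fundSeq_of_CNF_last_pos x hne hCNF one_ne_zero
    (lt_of_lt_of_le one_lt_omega0 (omega_le_OO_b a b 0))]
  rw [fundSeq_one]
  have hsub : ((b+1:ℕ):Ordinal) - 1 = (b:Ordinal) := by
    have h' : ((b+1:ℕ):Ordinal) = 1 + (b:Ordinal) := by
      exact_mod_cast congrArg (Nat.cast : ℕ → Ordinal.{0}) (Nat.add_comm b 1)
    rw [h', Ordinal.add_sub_cancel]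
  rw [hsub]
  rcases Nat.eq_zero_or_pos a with rfl | hapos
  · simp [ofCNF, OO, opow_one]
  · rw [if_neg hapos.ne']
    simp [ofCNF, OO, opow_one, add_assoc]

lemma fundSeq_OO_a (x a : ℕ) : fundSeq x (OO (a+1) 0 0) = OO a x 0 := by
  have hne : OO (a+1) 0 0 ≠ 0 :=
    fun h => absurd (h ▸ omega_sq_le_OO_a a 0 0)
      (by simp [(opow_pos (2:Ordinal) omega0_pos).not_ge])
  have hCNF := CNF_OO (a+1) 0 0
  rw [if_pos rfl, if_pos rfl, if_neg (Nat.succ_ne_zero a), List.append_nil,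
    List.append_nil] at hCNF
  have h2lt : (2:Ordinal) < OO (a+1) 0 0 :=
    lt_of_lt_of_le (by
      have := nat_lt_omega0 2
      calc (2:Ordinal) < omega0 := by exact_mod_cast this
        _ ≤ omega0 ^ (2:Ordinal) := by
            conv_lhs => rw [← opow_one omega0]
            exact opow_le_opow_right omega0_pos one_le_two) (omega_sq_le_OO_a a 0 0)
  have hCNF' : Ordinal.CNF omega0 (OO (a+1) 0 0) = [] ++ [((2:Ordinal), ((a+1:ℕ):Ordinal))] := by
    rw [hCNF]; rfl
  rw [fundSeq_of_CNF_last_pos x hne hCNF' two_ne_zero h2lt]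
  rw [fundSeq_two]
  have hsub : ((a+1:ℕ):Ordinal) - 1 = (a:Ordinal) := by
    have h' : ((a+1:ℕ):Ordinal) = 1 + (a:Ordinal) := by
      exact_mod_cast congrArg (Nat.cast : ℕ → Ordinal.{0}) (Nat.add_comm a 1)
    rw [h', Ordinal.add_sub_cancel]
  rw [hsub]
  simp [ofCNF, OO, opow_one]

noncomputable def HH : Ordinal.{0} → ℕ → ℕ := iterOrd (fun b => b + 1)

lemma OO_lt_c (a b c : ℕ) : OO a b c < OO a b (c+1) := by
  rw [OO, OO]
  apply add_lt_add_right
  exact_mod_cast Nat.lt_succ_self c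

lemma OO_lt_b (a b x : ℕ) : OO a b x < OO a (b+1) 0 := by
  rw [OO, OO]
  rw [add_assoc, add_assoc]
  apply add_lt_add_right
  have h1 : omega0 * (b:Ordinal) + x < omega0 * (b:Ordinal) + omega0 :=
    add_lt_add_right (nat_lt_omega0 x) _
  have h2 : omega0 * (b:Ordinal) + omega0 = omega0 * ((b+1:ℕ):Ordinal) := by
    push_cast
    rw [mul_add, mul_one]
  calc omega0 * (b:Ordinal) + x < omega0 * ((b+1:ℕ):Ordinal) := h2 ▸ h1
    _ ≤ omega0 * ((b+1:ℕ):Ordinal) + ((0:ℕ):Ordinal) := by simp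
lemma OO_lt_a (a x : ℕ) : OO a x 0 < OO (a+1) 0 0 := by
  rw [OO, OO]
  simp only [Nat.cast_zero, add_zero, mul_zero]
  have h1 : omega0 * (x:Ordinal) < omega0 ^ (2:Ordinal) := by
    simpa using lt_omega_sq x 0
  calc omega0 ^ (2:Ordinal) * a + omega0 * x
      < omega0 ^ (2:Ordinal) * a + omega0 ^ (2:Ordinal) := add_lt_add_right h1 _
    _ = omega0 ^ (2:Ordinal) * ((a+1:ℕ):Ordinal) := by push_cast; rw [mul_add, mul_one]

lemma HH_zero (d : ℕ) : HH 0 d = d := by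
  rw [HH, iterOrd_def, if_pos rfl]

lemma HH_c (a b c d : ℕ) : HH (OO a b (c+1)) d = HH (OO a b c) (d+1) := by
  rw [HH, iterOrd_def, if_neg (OO_ne_zero_c a b c), fundSeq_OO_c,
    if_pos (OO_lt_c a b c)]

lemma HH_b (a b d : ℕ) : HH (OO a (b+1) 0) d = HH (OO a b d) (d+1) := by
  have hne : OO a (b+1) 0 ≠ 0 :=
    fun h => absurd (h ▸ omega_le_OO_b a b 0) (by simp [Ordinal.omega0_pos.not_ge])
  rw [HH, iterOrd_def, if_neg hne, fundSeq_OO_b, if_pos (OO_lt_b a b d)]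

lemma HH_a (a d : ℕ) : HH (OO (a+1) 0 0) d = HH (OO a d 0) (d+1) := by
  have hne : OO (a+1) 0 0 ≠ 0 :=
    fun h => absurd (h ▸ omega_sq_le_OO_a a 0 0)
      (by simp [(opow_pos (2:Ordinal) omega0_pos).not_ge])
  rw [HH, iterOrd_def, if_neg hne, fundSeq_OO_a, if_pos (OO_lt_a a d)]

lemma HH_c_add (a b : ℕ) : ∀ c d, HH (OO a b c) d = HH (OO a b 0) (d + c) := by
  intro c
  induction c with
  | zero => intro d; rfl
  | succ c ih =>
    intro d
    rw [HH_c, ih]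
    ring_nf

lemma HH_b_iter (a : ℕ) : ∀ b d, HH (OO a b 0) d = HH (OO a 0 0) ((fun y => 2*y+1)^[b] d) := by
  intro b
  induction b with
  | zero => intro d; rfl
  | succ b ih =>
    intro d
    rw [HH_b, HH_c_add, ih, Function.iterate_succ_apply,
      show d + 1 + d = 2*d+1 by omega]

lemma HH_a_step (a d : ℕ) :
    HH (OO (a+1) 0 0) d = HH (OO a 0 0) ((fun y => 2*y+1)^[d] (d+1)) := by
  rw [HH_a, HH_b_iter]

lemma le_iterate_g2 (k : ℕ) : ∀ z, z ≤ (fun y : ℕ => 2*y+1)^[k] z := by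
  induction k with
  | zero => simp
  | succ k ih =>
    intro z
    rw [Function.iterate_succ_apply]
    calc z ≤ 2*z+1 := by omega
      _ ≤ _ := ih _

lemma g2_iter_mono (k : ℕ) : Monotone ((fun y : ℕ => 2*y+1)^[k]) :=
  Monotone.iterate (fun x y h => by omega) k

lemma g2_iter_ge (b d : ℕ) : 2^b * d ≤ (fun y : ℕ => 2*y+1)^[b] d := by
  induction b generalizing d with
  | zero => simp
  | succ b ih =>
    rw [Function.iterate_succ_apply]
    calc 2^(b+1)*d = 2^b * (2*d) := by ring
      _ ≤ 2^b * (2*d+1) := by gcongr; omega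
      _ ≤ _ := ih (2*d+1)

lemma g2_arg_mono : Monotone (fun d : ℕ => (fun y : ℕ => 2*y+1)^[d] (d+1)) := by
  intro d d' h
  calc (fun y : ℕ => 2*y+1)^[d] (d+1) ≤ (fun y : ℕ => 2*y+1)^[d] (d'+1) :=
      g2_iter_mono d (by omega)
    _ ≤ (fun y : ℕ => 2*y+1)^[d' - d + d] (d'+1) := by
        rw [Function.iterate_add_apply]
        exact le_iterate_g2 _ _
    _ = (fun y : ℕ => 2*y+1)^[d'] (d'+1) := by rw [Nat.sub_add_cancel h]

lemma HH_mono (a : ℕ) : Monotone (fun d => HH (OO a 0 0) d) := by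
  induction a with
  | zero =>
    intro d d' h
    simpa [OO_zero, HH_zero] using h
  | succ a ih =>
    intro d d' h
    simp only [HH_a_step]
    exact ih (g2_arg_mono h)

lemma HH_ge_self (a d : ℕ) : d ≤ HH (OO a 0 0) d := by
  induction a generalizing d with
  | zero => rw [OO_zero, HH_zero]
  | succ a ih =>
    rw [HH_a_step]
    calc d ≤ (fun y : ℕ => 2*y+1)^[d] (d+1) := le_trans (by omega) (le_iterate_g2 _ _)
      _ ≤ _ := ih _

lemma HH_tower (a : ℕ) : ∀ d, (fun x : ℕ => 2^x)^[a] d ≤ HH (OO a 0 0) d := by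
  induction a with
  | zero => intro d; rw [OO_zero, HH_zero]; rfl
  | succ a ih =>
    intro d
    rw [Function.iterate_succ_apply, HH_a_step]
    refine le_trans (ih (2^d)) (HH_mono a ?_)
    calc (2:ℕ)^d = 2^d * 1 := (mul_one _).symm
      _ ≤ 2^d * (d+1) := by gcongr; omega
      _ ≤ _ := g2_iter_ge d (d+1)

-- basic helpers
lemma nle2p (x : ℕ) : x ≤ 2^x := (Nat.lt_two_pow_self (n := x)).le
lemma pw {x y : ℕ} (h : x ≤ y) : 2^x ≤ 2^y := Nat.pow_le_pow_right (by norm_num) h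
lemma le_t2 (x : ℕ) : x ≤ 2^2^x := (nle2p x).trans (pw (nle2p x))
lemma le_t3 (x : ℕ) : x ≤ 2^2^2^x := (nle2p x).trans (pw (le_t2 x))
lemma le_t4 (x : ℕ) : x ≤ 2^2^2^2^x := (nle2p x).trans (pw (le_t3 x))
lemma le_t5 (x : ℕ) : x ≤ 2^2^2^2^2^x := (nle2p x).trans (pw (le_t4 x))
lemma p1 (x : ℕ) : 2^x + 1 ≤ 2^(x+1) := by
  have : (1:ℕ) ≤ 2^x := Nat.one_le_two_pow
  rw [pow_succ]; omega
lemma p2 (x : ℕ) : 2^2^x + 1 ≤ 2^2^(x+1) := (p1 _).trans (pw (p1 x))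
lemma p3 (x : ℕ) : 2^2^2^x + 1 ≤ 2^2^2^(x+1) := (p1 _).trans (pw (p2 x))
lemma p4 (x : ℕ) : 2^2^2^2^x + 1 ≤ 2^2^2^2^(x+1) := (p1 _).trans (pw (p3 x))
lemma choose_le_two_pow (n k : ℕ) : Nat.choose n k ≤ 2^n := by
  rcases le_or_gt k n with h | h
  · calc Nat.choose n k ≤ ∑ m ∈ Finset.range (n+1), n.choose m :=
        Finset.single_le_sum (f := fun m => n.choose m) (fun _ _ => Nat.zero_le _)
          (Finset.mem_range.2 (Nat.lt_succ_of_le h))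
      _ = 2^n := Nat.sum_range_choose n
  · rw [Nat.choose_eq_zero_of_lt h]; exact Nat.zero_le _

lemma bd_dfrak {k q B : ℕ} (hk : k ≤ B) (hq : q ≤ B) : dfrak k q ≤ 2^2^(3*B) := by
  rw [dfrak]
  calc (2*q)^(2^k) ≤ (2^(2*q))^(2^k) := Nat.pow_le_pow_left (nle2p _) _
    _ = 2^(2*q*2^k) := by rw [← pow_mul]
    _ ≤ 2^(2^(3*B)) := by
        apply pw
        calc 2*q*2^k ≤ 2^(2*q)*2^k := Nat.mul_le_mul_right _ (nle2p _)
          _ = 2^(2*q+k) := by rw [← pow_add]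
          _ ≤ 2^(3*B) := pw (by omega)

lemma bd_B_le (B c1 c2 : ℕ) (h : 1 ≤ c1) : B ≤ 2^2^(c1*B) := by
  exact (le_t2 B).trans (pw (pw (Nat.le_mul_of_pos_left B h)))

lemma bd_zeta0 {k q B : ℕ} (hk : k ≤ B) (hq : q ≤ B) (hB : 1 ≤ B) :
    zeta0 k q ≤ 2^2^2^(4*B) := by
  have hBle : B ≤ 2^2^(3*B) := bd_B_le B 3 0 (by norm_num)
  calc zeta0 k q ≤ 2^(k + dfrak k q) := choose_le_two_pow _ _
    _ ≤ 2^(2^2^(3*B) + 2^2^(3*B)) := pw (Nat.add_le_add (hk.trans hBle) (bd_dfrak hk hq))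
    _ = 2^(2^(2^(3*B)+1)) := by rw [← two_mul, ← pow_succ']
    _ ≤ 2^(2^(2^(3*B+1))) := pw (pw (p1 _))
    _ ≤ 2^2^2^(4*B) := pw (pw (pw (by omega)))

lemma bd_zeta1 {k q d B : ℕ} (hk : k ≤ B) (hq : q ≤ B) (hd : d ≤ B) (hB : 1 ≤ B) :
    zeta1 k q d ≤ 2^2^2^(5*B) := by
  have h1 : Nat.choose (d + k) k + 2 ≤ 2^(2*B+1) := by
    have := choose_le_two_pow (d+k) k
    have h2 : (2:ℕ) ≤ 2^(2*B) := by
      calc (2:ℕ) = 2^1 := rfl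
        _ ≤ 2^(2*B) := pw (by omega)
    have h3 : 2^(d+k) ≤ 2^(2*B) := pw (by omega)
    calc Nat.choose (d+k) k + 2 ≤ 2^(2*B) + 2^(2*B) := by omega
      _ = 2^(2*B+1) := by rw [← two_mul, ← pow_succ']
  calc zeta1 k q d ≤ 2^(2*B+1) * 2^2^2^(4*B) :=
      Nat.mul_le_mul h1 (bd_zeta0 hk hq hB)
    _ = 2^(2*B+1 + 2^2^(4*B)) := by rw [← pow_add]
    _ ≤ 2^(2^2^(4*B) + 2^2^(4*B)) := by
        apply pw
        have : 2*B+1 ≤ 2^2^(4*B) := by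
          calc 2*B+1 ≤ 4*B := by omega
            _ ≤ 2^(4*B) := nle2p _
            _ ≤ 2^2^(4*B) := pw (nle2p _)
        omega
    _ = 2^(2^(2^(4*B)+1)) := by rw [← two_mul, ← pow_succ']
    _ ≤ 2^2^2^(4*B+1) := pw (pw (p1 _))
    _ ≤ 2^2^2^(5*B) := pw (pw (pw (by omega)))

lemma bd_zeta2 {k q d B : ℕ} (hk : k ≤ B) (hq : q ≤ B) (hd : d ≤ B) (hB : 1 ≤ B) :
    zeta2 k q d ≤ 2^2^2^2^2^(6*B) := by
  set z := zeta1 k q d with hzdef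
  have hz : z ≤ 2^2^2^(5*B) := bd_zeta1 hk hq hd hB
  have step1 : zeta2 k q d ≤ 2^((z+1)*2^z) := by
    calc zeta2 k q d = (z+1)^(2^z - 1) := rfl
      _ ≤ (z+1)^(2^z) := Nat.pow_le_pow_right (Nat.succ_le_succ (Nat.zero_le z)) (Nat.sub_le _ _)
      _ ≤ (2^(z+1))^(2^z) := Nat.pow_le_pow_left (nle2p _) _
      _ = 2^((z+1)*2^z) := by rw [← pow_mul]
  have step2 : (z+1)*2^z ≤ 2^(2*z+1) := by
    calc (z+1)*2^z ≤ 2^(z+1)*2^z := Nat.mul_le_mul_right _ (nle2p _)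
      _ = 2^(z+1+z) := by rw [← pow_add]
      _ = 2^(2*z+1) := by ring_nf
  have step3 : 2*z+1 ≤ 2^2^2^(6*B) := by
    calc 2*z+1 ≤ 2*2^2^2^(5*B)+2 := by omega
      _ = 2^(2^2^(5*B)+1) + 2 := by rw [pow_succ']
      _ ≤ 2^(2^2^(5*B)+1) + 2^(2^2^(5*B)+1) := by
          have : (2:ℕ) ≤ 2^(2^2^(5*B)+1) := by
            calc (2:ℕ) = 2^1 := rfl
              _ ≤ 2^(2^2^(5*B)+1) := pw (Nat.le_add_left 1 _)
          omega
      _ = 2^(2^2^(5*B)+2) := by rw [← two_mul, ← pow_succ']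
      _ ≤ 2^(2^2^(5*B)+2^2^(5*B)) := by
          apply pw
          have : (2:ℕ) ≤ 2^2^(5*B) := by
            calc (2:ℕ) = 2^1 := rfl
              _ ≤ _ := pw (Nat.one_le_two_pow)
          omega
      _ = 2^(2^(2^(5*B)+1)) := by rw [← two_mul, ← pow_succ']
      _ ≤ 2^2^2^(5*B+1) := pw (pw (p1 _))
      _ ≤ 2^2^2^(6*B) := pw (pw (pw (by omega)))
  calc zeta2 k q d ≤ 2^((z+1)*2^z) := step1
    _ ≤ 2^2^(2*z+1) := pw (step2)
    _ ≤ 2^2^2^2^2^(6*B) := pw (pw step3)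

lemma bd_u {k q d B : ℕ} (hk : k ≤ B) (hq : q ≤ B) (hd : d ≤ B) (hB : 1 ≤ B) :
    zeta1 k q d * zeta2 k q d ≤ 2^2^2^2^2^(7*B) := by
  have h1 : zeta1 k q d ≤ 2^2^2^2^2^(6*B) := by
    calc zeta1 k q d ≤ 2^2^2^(5*B) := bd_zeta1 hk hq hd hB
      _ ≤ 2^2^2^(6*B) := pw (pw (pw (by omega)))
      _ ≤ 2^2^2^2^(6*B) := pw (nle2p _)
      _ ≤ 2^2^2^2^2^(6*B) := pw (nle2p _)
  calc zeta1 k q d * zeta2 k q d ≤ 2^2^2^2^2^(6*B) * 2^2^2^2^2^(6*B) :=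
      Nat.mul_le_mul h1 (bd_zeta2 hk hq hd hB)
    _ = 2^(2^2^2^2^(6*B) + 2^2^2^2^(6*B)) := by rw [← pow_add]
    _ = 2^(2^(2^2^2^(6*B)+1)) := by rw [← two_mul, ← pow_succ']
    _ ≤ 2^2^2^2^2^(6*B+1) := pw (pw (p3 _))
    _ ≤ 2^2^2^2^2^(7*B) := pw (pw (pw (pw (pw (by omega)))))

lemma key1 {k q d B : ℕ} (hk1 : k + 1 ≤ B) (hq : q ≤ B) (hd : d ≤ B) (hB : 2 ≤ B) :
    2 * Nat.choose (zeta1 k q d * zeta2 k q d + (k+1)) (k+1) * (zeta1 k q d * zeta2 k q d)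
      ≤ 2^2^2^2^2^2^(8*B) := by
  set u := zeta1 k q d * zeta2 k q d with hudef
  have hu : u ≤ 2^2^2^2^2^(7*B) := bd_u (by omega) hq hd (by omega)
  have h1 : 2 * Nat.choose (u + (k+1)) (k+1) * u ≤ 2^(2*u+k+2) := by
    calc 2 * Nat.choose (u + (k+1)) (k+1) * u ≤ 2 * 2^(u+(k+1)) * 2^u :=
        Nat.mul_le_mul (Nat.mul_le_mul_left _ (choose_le_two_pow _ _)) (nle2p u)
      _ = 2^(2*u+k+2) := by rw [← pow_succ', ← pow_add]; congr 1; omega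
  refine h1.trans (pw ?_)
  calc 2*u+k+2 ≤ 2*2^2^2^2^2^(7*B) + 2*B := by omega
    _ ≤ 4*2^2^2^2^2^(7*B) := by
        have : B ≤ 2^2^2^2^2^(7*B) :=
          (le_t5 B).trans (pw (pw (pw (pw (pw (by omega))))))
        omega
    _ = 2^(2^2^2^2^(7*B)+2) := by
        rw [pow_add]
        ring
    _ ≤ 2^(2^2^2^2^(7*B+1)+1) := pw (by have := p4 (7*B); omega)
    _ ≤ 2^(2^2^2^2^(7*B+2)) := pw (p4 _)
    _ ≤ 2^2^2^2^2^(8*B) := pw (pw (pw (pw (pw (by omega)))))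

lemma key2 {k d B : ℕ} (hk : k ≤ B) (hd : d ≤ B) (hB : 2 ≤ B) :
    efrak k d ≤ 2^2^2^2^2^2^(8*B) := by
  set j := k - 1 with hjdef
  have hj : j ≤ B := by omega
  have hdf : dfrak j d ≤ 2^2^(3*B) := bd_dfrak hj hd
  have hX : (d + dfrak j d)^j ≤ 2^2^(5*B) := by
    have hd2 : d ≤ 2^2^(3*B) := hd.trans ((le_t2 B).trans (pw (pw (by omega))))
    calc (d + dfrak j d)^j ≤ (2^2^(3*B) + 2^2^(3*B))^j :=
        Nat.pow_le_pow_left (by omega) _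
      _ = (2^(2^(3*B)+1))^j := by rw [← two_mul, ← pow_succ']
      _ ≤ (2^(2^(3*B)+1))^B := Nat.pow_le_pow_right Nat.one_le_two_pow hj
      _ = 2^((2^(3*B)+1)*B) := by rw [← pow_mul]
      _ ≤ 2^(2^(3*B+1)*2^B) := pw (Nat.mul_le_mul (p1 _) (nle2p B))
      _ = 2^(2^(3*B+1+B)) := by rw [← pow_add]
      _ ≤ 2^2^(5*B) := pw (pw (by omega))
  have hterm1 : 2^((d + dfrak j d)^j + 1) * d ≤ 2^2^2^(6*B) := by
    calc 2^((d + dfrak j d)^j + 1) * d ≤ 2^(2^2^(5*B)+1) * 2^B :=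
        Nat.mul_le_mul (pw (by omega)) (hd.trans (nle2p B))
      _ = 2^(2^2^(5*B)+1+B) := by rw [← pow_add]
      _ ≤ 2^(2^2^(5*B)+2^2^(5*B)) := by
          apply pw
          have : B + 1 ≤ 2^2^(5*B) := le_trans (by omega) ((nle2p (5*B)).trans (pw (nle2p (5*B))))
          omega
      _ = 2^(2^(2^(5*B)+1)) := by rw [← two_mul, ← pow_succ']
      _ ≤ 2^2^2^(5*B+1) := pw (pw (p1 _))
      _ ≤ 2^2^2^(6*B) := pw (pw (pw (by omega)))
  have hsum : efrak k d ≤ 2^2^2^(6*B) + B + 2^2^(3*B) := by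
    rw [efrak, ← hjdef]
    have h2 : d ≤ B := hd
    omega
  calc efrak k d ≤ 2^2^2^(6*B) + B + 2^2^(3*B) := hsum
    _ ≤ 3*2^2^2^(6*B) := by
        have hB1 : B ≤ 2^2^2^(6*B) := (le_t3 B).trans (pw (pw (pw (by omega))))
        have hB2 : 2^2^(3*B) ≤ 2^2^2^(6*B) := pw ((pw (by omega : 3*B ≤ 6*B)).trans (nle2p _))
        omega
    _ ≤ 2^(2^2^(6*B)+2) := by
        rw [pow_add]
        have : (1:ℕ) ≤ 2^2^2^(6*B) := Nat.one_le_two_pow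
        nlinarith [this]
    _ ≤ 2^(2^2^(6*B+1)+1) := pw (by have := p2 (6*B); omega)
    _ ≤ 2^2^2^(6*B+2) := pw (p2 _)
    _ ≤ 2^2^2^(8*B) := pw (pw (pw (by omega)))
    _ ≤ 2^2^2^2^2^2^(8*B) := pw (pw (pw ((le_t3 _))))

lemma le_iter_E (k : ℕ) : ∀ z, z ≤ (fun x : ℕ => 2^x)^[k] z := by
  induction k with
  | zero => intro z; simp
  | succ k ih =>
    intro z
    rw [Function.iterate_succ_apply]
    exact (nle2p z).trans (ih _)

lemma iter_E_mono (k : ℕ) : Monotone ((fun x : ℕ => 2^x)^[k]) :=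
  Monotone.iterate (fun x y h => pw h) k

lemma iter_E_count {j k : ℕ} (h : j ≤ k) (d : ℕ) :
    (fun x : ℕ => 2^x)^[j] d ≤ (fun x : ℕ => 2^x)^[k] d := by
  calc (fun x : ℕ => 2^x)^[j] d ≤ (fun x : ℕ => 2^x)^[k-j] ((fun x : ℕ => 2^x)^[j] d) :=
      le_iter_E _ _
    _ = (fun x : ℕ => 2^x)^[k] d := by
        rw [← Function.iterate_add_apply, Nat.sub_add_cancel h]

lemma iter_E_eight (B : ℕ) : (fun x : ℕ => 2^x)^[8] B = 2^2^2^2^2^2^2^2^B := by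
  simp [Function.iterate_succ_apply']

lemma eight_mul_le {B : ℕ} (hB : 2 ≤ B) : 8*B ≤ 2^2^B := by
  have h2 : ∀ b, 2 ≤ b → 2*b ≤ 2^b := by
    intro b hb
    induction b with
    | zero => omega
    | succ b ih =>
      rcases Nat.lt_or_ge b 2 with h | h
      · interval_cases b <;> norm_num
      · have := ih (by omega)
        rw [pow_succ]
        omega
  have h3 : B + 2 ≤ 2^B := by
    have := h2 B hB
    omega
  calc 8*B = 4*(2*B) := by ring
    _ ≤ 4*2^B := by have := h2 B hB; omega
    _ = 2^(B+2) := by rw [pow_add]; ring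
    _ ≤ 2^2^B := pw h3

lemma T6_le {B : ℕ} (hB : 2 ≤ B) :
    2^2^2^2^2^2^(8*B) ≤ (fun x : ℕ => 2^x)^[8] B := by
  rw [iter_E_eight]
  exact pw (pw (pw (pw (pw (pw (eight_mul_le hB))))))

lemma pfrak_le_tower : ∀ n d : ℕ, 1 ≤ n → n ≤ d → 2 ≤ d →
    pfrak n d ≤ (fun x : ℕ => 2^x)^[8*(n-1)] d := by
  intro n
  induction n with
  | zero => omega
  | succ n ih =>
    match n, ih with
    | 0, _ => intro d _ _ _; simp [pfrak]
    | (m+1), ih =>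
      intro d _ hnd hd2
      set B := (fun x : ℕ => 2^x)^[8*m] d with hBdef
      have hq : pfrak (m+1) d ≤ B := by
        have := ih d (by omega) (by omega) hd2
        simpa using this
      have hdB : d ≤ B := le_iter_E _ _
      have hBB : 2 ≤ B := hd2.trans hdB
      have hkB : m + 2 ≤ B := hnd.trans hdB
      have hiter : (fun x : ℕ => 2^x)^[8*(m+2-1)] d = (fun x : ℕ => 2^x)^[8] B := by
        rw [hBdef, ← Function.iterate_add_apply]
        congr 1
        omega
      rw [hiter]
      show pfrak (m+2) d ≤ _
      rw [pfrak]
      apply max_le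
      · exact le_trans (key1 (by omega) hq hdB hBB) (T6_le hBB)
      · exact le_trans (key2 (by omega) hdB hBB) (T6_le hBB)

/-- Growth-rate bound for the primality bound: for `n ≥ 1` and `d ≥ n`,
`𝔭ₙ(d) ≤ 𝒢^{ω²·8n}(d)`, where `𝒢(b) = b+1`. -/
theorem pfrak_le_iterOrd (n d : ℕ) (hn : 1 ≤ n) (hd : n ≤ d) :
    pfrak n d ≤
      iterOrd (fun b => b + 1) (Ordinal.omega0 ^ (2 : ℕ) * ((8 * n : ℕ) : Ordinal)) d := by
  have hord : OO (8*n) 0 0 = Ordinal.omega0 ^ (2 : ℕ) * ((8 * n : ℕ) : Ordinal) := by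
    rw [OO, ← opow_natCast]
    norm_num
  have hgoal : iterOrd (fun b => b + 1) (Ordinal.omega0 ^ (2 : ℕ) * ((8 * n : ℕ) : Ordinal)) d
      = HH (OO (8*n) 0 0) d := by rw [hord, HH]
  rw [hgoal]
  rcases Nat.lt_or_ge d 2 with hd2 | hd2
  · have hn1 : n = 1 := by omega
    have hp : pfrak n d = d := by rw [hn1]; rfl
    rw [hp]
    exact HH_ge_self _ d
  · calc pfrak n d ≤ (fun x : ℕ => 2^x)^[8*(n-1)] d := pfrak_le_tower n d hn hd hd2
      _ ≤ (fun x : ℕ => 2^x)^[8*n] d := iter_E_count (by omega) d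
      _ ≤ HH (OO (8*n) 0 0) d := HH_tower (8*n) d
end
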